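/- arXiv:2202.05096 — 2 statements merged into one kernel-verified Lean document; each statement's English description precedes it below -/
import Mathlib

section
/- For any even j ≥ 2 and any θ ≥ 0, the squared j-th normalized Hermite coefficient of the interval indicator f_θ satisfies (4/j!)·h_{j-1}(θ)²·φ(θ)² ≤ (1 + θ√(e/j))^{2(j-1)} · e^{-θ²}. -/
open Real

/-- standard Gaussian density on ℝ -/
noncomputable def gaussPDF (x : ℝ) : ℝ := (Real.sqrt (2 * Real.pi))⁻¹ * Real.exp (-x ^ 2 / 2)

/-- probabilists' Hermite polynomial, as a real function -/
noncomputable def hermiteR (j : ℕ) (x : ℝ) : ℝ := Polynomial.aeval x (Polynomial.hermite j)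

open scoped Nat

/-- The square of the odd double factorial is at most the factorial. -/
lemma dfac_sq_le : ∀ m : ℕ, ((2 * m - 1)‼) ^ 2 ≤ (2 * m)!
  | 0 => le_refl 1
  | (m+1) => by
    have h := dfac_sq_le m
    have h1 : 2 * (m+1) - 1 = 2*m + 1 := by omega
    have h2 : (2*m+1)‼ = (2*m+1) * (2*m-1)‼ := by
      simpa using Nat.doubleFactorial_add_one (2*m)
    have h3 : (2*(m+1))! = (2*m+2) * ((2*m+1) * (2*m)!) := by
      have e : 2*(m+1) = (2*m+1)+1 := by omega
      rw [e, Nat.factorial_succ, Nat.factorial_succ]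
    rw [h1, h2, h3, mul_pow]
    calc (2*m+1)^2 * (2*m-1)‼^2 ≤ (2*m+1)^2 * (2*m)! := Nat.mul_le_mul_left _ h
      _ ≤ (2*m+2) * ((2*m+1) * (2*m)!) := by nlinarith [Nat.factorial_pos (2*m)]

lemma up_lemma {c : ℝ} (hc : 0 < c) : ∀ m : ℕ, ∀ i : ℕ, (m : ℝ) ≤ c → (m ! : ℝ) * c ^ i ≤ c ^ (m + i)
  | 0, i, _ => by simp
  | (m+1), i, hm => by
    have hm' : (m : ℝ) ≤ c := le_trans (by push_cast; linarith) hm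
    have ih := up_lemma hc m i hm'
    have hpos : (0:ℝ) < c ^ (m+i) := pow_pos hc _
    calc ((m+1)! : ℝ) * c ^ i = ((m:ℝ)+1) * ((m ! : ℝ) * c ^ i) := by
          push_cast [Nat.factorial_succ]; ring
      _ ≤ ((m:ℝ)+1) * c ^ (m+i) := by
          apply mul_le_mul_of_nonneg_left ih (by push_cast at hm ⊢; linarith [hc.le])
      _ ≤ c * c ^ (m+i) := by
          apply mul_le_mul_of_nonneg_right _ hpos.le
          push_cast at hm; linarith
      _ = c ^ (m+1+i) := by rw [← pow_succ']; ring_nf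

lemma down_lemma {c : ℝ} (hc : 0 ≤ c) (m : ℕ) :
    ∀ i : ℕ, c ≤ (m : ℝ) + 1 → (m ! : ℝ) * c ^ i ≤ ((m + i)! : ℝ)
  | 0, _ => by simp
  | (i+1), hm => by
    have ih := down_lemma hc m i hm
    have h2 : c ≤ ((m + i : ℕ) : ℝ) + 1 := by
      push_cast; linarith [Nat.cast_nonneg (α := ℝ) i]
    calc (m ! : ℝ) * c ^ (i+1) = ((m ! : ℝ) * c ^ i) * c := by ring
      _ ≤ ((m+i)! : ℝ) * c := mul_le_mul_of_nonneg_right ih hc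
      _ ≤ ((m+i)! : ℝ) * (((m+i : ℕ):ℝ) + 1) := by
          apply mul_le_mul_of_nonneg_left h2 (by positivity)
      _ = ((m + (i+1))! : ℝ) := by
          rw [show m + (i+1) = (m+i)+1 by omega, Nat.factorial_succ]; push_cast; ring

/-- Key factorial estimate: `m! (j/e)^(j-1-m) ≤ (π/2) j!` for `m ≤ j - 1`. -/
lemma key {j : ℕ} (hj : 2 ≤ j) {m : ℕ} (hm : m ≤ j - 1) :
    (m ! : ℝ) * ((j : ℝ) / Real.exp 1) ^ (j - 1 - m) ≤ Real.pi / 2 * (j)! := by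
  set c : ℝ := (j : ℝ) / Real.exp 1 with hc_def
  have hj1 : (1:ℝ) ≤ (j:ℝ) := by exact_mod_cast Nat.one_le_iff_ne_zero.mpr (by omega)
  have he : (0:ℝ) < Real.exp 1 := Real.exp_pos 1
  have hc : 0 < c := by positivity
  have hpi : 3.141592 < Real.pi := Real.pi_gt_d6
  have hexp : Real.exp 1 < 2.7182818286 := Real.exp_one_lt_d9
  have hcge : 2 / Real.pi ≤ c := by
    rw [hc_def, div_le_div_iff₀ (by linarith) he]
    have : (2:ℝ) ≤ (j:ℝ) := by exact_mod_cast hj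
    nlinarith
  have hcj : c ^ j ≤ ((j)! : ℝ) := by
    have h1 := Real.pow_div_factorial_le_exp (x := (j:ℝ)) (by positivity) j
    have h2 : Real.exp (j:ℝ) = (Real.exp 1) ^ j := by
      rw [← Real.exp_nat_mul]; norm_num
    rw [hc_def, div_pow, div_le_iff₀ (by positivity)]
    rw [div_le_iff₀ (by positivity)] at h1
    rw [h2] at h1; linarith
  have hfac_pos : (0:ℝ) < ((j)! : ℝ) := by exact_mod_cast Nat.factorial_pos j
  rcases le_or_gt (m : ℝ) c with hcase | hcase
  · have h1 := up_lemma hc m (j - 1 - m) hcase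
    have hmj : m + (j - 1 - m) = j - 1 := by omega
    rw [hmj] at h1
    have h3 : c ^ (j-1) * c = c ^ j := by
      rw [← pow_succ]; congr 1; omega
    have h4 : c ^ (j-1) ≤ ((j)! : ℝ) / c := by
      rw [le_div_iff₀ hc, h3]; exact hcj
    refine h1.trans (h4.trans ?_)
    rw [div_le_iff₀ hc]
    have : Real.pi / 2 * ((j)! : ℝ) * c ≥ Real.pi / 2 * ((j)! : ℝ) * (2 / Real.pi) := by
      apply mul_le_mul_of_nonneg_left hcge (by positivity)
    have heq : Real.pi / 2 * ((j)! : ℝ) * (2 / Real.pi) = ((j)!:ℝ) := by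
      field_simp
    linarith
  · have h1 := down_lemma hc.le m (j - 1 - m) (by linarith [Nat.cast_nonneg (α := ℝ) m])
    have hmj : m + (j - 1 - m) = j - 1 := by omega
    rw [hmj] at h1
    refine h1.trans ?_
    have h2 : ((j-1)! : ℝ) ≤ ((j)! : ℝ) := by
      exact_mod_cast Nat.factorial_le (by omega)
    nlinarith

/-- Bound on Hermite coefficients. -/
lemma coeff_bound {j : ℕ} (hj : 2 ≤ j) {i : ℕ} (hi : i ≤ j - 1) :
    |(((Polynomial.hermite (j-1)).coeff i : ℤ) : ℝ)| ≤
      Real.sqrt (Real.pi / 2 * (j)!) * Real.sqrt (Real.exp 1 / j) ^ i * ((j-1).choose i) := by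
  have hjpos : (0:ℝ) < (j:ℝ) := by exact_mod_cast (by omega : 0 < j)
  have he : (0:ℝ) < Real.exp 1 := Real.exp_pos 1
  have hB : (0:ℝ) ≤ Real.pi / 2 * (j)! := by positivity
  by_cases hpar : Even ((j-1) + i)
  · rw [Polynomial.coeff_hermite_of_even_add hpar]
    push_cast
    rw [abs_mul, abs_mul, abs_pow, abs_neg, abs_one, one_pow, one_mul,
      Nat.abs_cast, Nat.abs_cast]
    have hd : Even ((j-1) - i) := (Nat.even_sub hi).mpr (by
      rw [Nat.even_add] at hpar; tauto)
    obtain ⟨k, hk⟩ := hd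
    have hk2 : (j-1) - i = 2 * k := by omega
    apply mul_le_mul_of_nonneg_right _ (Nat.cast_nonneg _)
    have hrhs_nn : (0:ℝ) ≤ Real.sqrt (Real.pi / 2 * (j)!) * Real.sqrt (Real.exp 1 / j) ^ i := by
      positivity
    have hsq : ((((j-1) - i - 1)‼ : ℕ) : ℝ)^2 ≤
        (Real.sqrt (Real.pi / 2 * (j)!) * Real.sqrt (Real.exp 1 / j) ^ i)^2 := by
      have e1 : (Real.sqrt (Real.pi / 2 * (j)!) * Real.sqrt (Real.exp 1 / j) ^ i)^2
          = (Real.pi / 2 * (j)!) * (Real.exp 1 / j) ^ i := by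
        rw [mul_pow, ← pow_mul, mul_comm i 2, pow_mul, Real.sq_sqrt hB,
          Real.sq_sqrt (by positivity)]
      rw [e1]
      have h1 : ((((j-1) - i - 1)‼ : ℕ) : ℝ)^2 ≤ (((2*k)! : ℕ) : ℝ) := by
        have := dfac_sq_le k
        rw [hk2]
        exact_mod_cast this
      have h2 := key hj (m := 2*k) (by omega)
      have hexp : j - 1 - (2*k) = i := by omega
      rw [hexp] at h2
      have hji : (0:ℝ) < ((j:ℝ)/Real.exp 1) ^ i := by positivity
      have h3 : (((2*k)! : ℕ) : ℝ) ≤ (Real.pi / 2 * (j)!) * (Real.exp 1 / j) ^ i := by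
        rw [show (Real.exp 1 / (j:ℝ)) ^ i = (((j:ℝ)/Real.exp 1) ^ i)⁻¹ by
          rw [← inv_pow]; congr 1; field_simp]
        rw [le_mul_inv_iff₀ hji]
        exact h2
      exact h1.trans h3
    exact (pow_le_pow_iff_left₀ (Nat.cast_nonneg _) hrhs_nn two_ne_zero).mp hsq
  · rw [Polynomial.coeff_hermite_of_odd_add (Nat.odd_iff.mpr (by
      rcases Nat.even_or_odd ((j-1)+i) with h | h
      · exact absurd h hpar
      · exact Nat.odd_iff.mp h))]
    simp only [Int.cast_zero, abs_zero]
    positivity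

/-- Bound on the Hermite polynomial itself. -/
lemma hermite_abs_le {j : ℕ} (hj : 2 ≤ j) {θ : ℝ} (hθ : 0 ≤ θ) :
    |hermiteR (j-1) θ| ≤
      Real.sqrt (Real.pi / 2 * (j)!) * (1 + θ * Real.sqrt (Real.exp 1 / j)) ^ (j-1) := by
  set n := j - 1 with hn
  set B := Real.sqrt (Real.pi / 2 * (j)!) with hB
  set y := Real.sqrt (Real.exp 1 / j) with hy
  have hy0 : 0 ≤ y := Real.sqrt_nonneg _
  have hB0 : 0 ≤ B := Real.sqrt_nonneg _
  have hexp : hermiteR n θ = ∑ i ∈ Finset.range (n+1),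
      (((Polynomial.hermite n).coeff i : ℤ) : ℝ) * θ ^ i := by
    rw [hermiteR, Polynomial.aeval_eq_sum_range' (n := n+1)
      (by rw [Polynomial.natDegree_hermite]; omega)]
    simp [zsmul_eq_mul]
  rw [hexp]
  calc |∑ i ∈ Finset.range (n+1), (((Polynomial.hermite n).coeff i : ℤ) : ℝ) * θ ^ i|
      ≤ ∑ i ∈ Finset.range (n+1), |(((Polynomial.hermite n).coeff i : ℤ) : ℝ) * θ ^ i| :=
        Finset.abs_sum_le_sum_abs _ _
    _ ≤ ∑ i ∈ Finset.range (n+1), B * ((θ * y) ^ i * (n.choose i)) := by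
        apply Finset.sum_le_sum
        intro i hi
        rw [Finset.mem_range] at hi
        rw [abs_mul, abs_pow, abs_of_nonneg hθ]
        have h1 := coeff_bound hj (i := i) (by omega)
        calc |(((Polynomial.hermite n).coeff i : ℤ) : ℝ)| * θ ^ i
            ≤ (B * y ^ i * (n.choose i)) * θ ^ i := by
              apply mul_le_mul_of_nonneg_right h1 (by positivity)
          _ = B * ((θ * y) ^ i * (n.choose i)) := by rw [mul_pow]; ring
    _ = B * ∑ i ∈ Finset.range (n+1), (θ * y) ^ i * 1 ^ (n - i) * (n.choose i) := by
        rw [Finset.mul_sum]; congr 1; funext i; ring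
    _ = B * (θ * y + 1) ^ n := by rw [add_pow]
    _ = B * (1 + θ * y) ^ n := by rw [add_comm]

theorem interval_hermite_coeff_sq_bound (j : ℕ) (hj : Even j) (hj2 : 2 ≤ j) (θ : ℝ) (hθ : 0 ≤ θ) :
    (4 / (Nat.factorial j : ℝ)) * hermiteR (j - 1) θ ^ 2 * gaussPDF θ ^ 2 ≤
      (1 + θ * Real.sqrt (Real.exp 1 / j)) ^ (2 * (j - 1)) * Real.exp (-θ ^ 2) := by
  have hfac : (0:ℝ) < (j)! := by exact_mod_cast Nat.factorial_pos j
  have hpi : (0:ℝ) < Real.pi := Real.pi_pos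
  have hy0 : (0:ℝ) ≤ Real.sqrt (Real.exp 1 / j) := Real.sqrt_nonneg _
  have h1 := hermite_abs_le hj2 hθ
  have hB2 : Real.sqrt (Real.pi / 2 * (j)!) ^ 2 = Real.pi / 2 * (j)! :=
    Real.sq_sqrt (by positivity)
  have hsq : hermiteR (j-1) θ ^ 2 ≤
      (Real.pi / 2 * (j)!) * (1 + θ * Real.sqrt (Real.exp 1 / j)) ^ (2 * (j-1)) := by
    have := mul_self_le_mul_self (abs_nonneg _) h1
    rw [← abs_mul, ← pow_two, abs_pow, ← pow_two] at this
    calc hermiteR (j-1) θ ^ 2 = |hermiteR (j-1) θ| ^ 2 := (sq_abs _).symm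
      _ ≤ (Real.sqrt (Real.pi / 2 * (j)!) * (1 + θ * Real.sqrt (Real.exp 1 / j)) ^ (j-1)) ^ 2 :=
          this
      _ = (Real.pi / 2 * (j)!) * (1 + θ * Real.sqrt (Real.exp 1 / j)) ^ (2 * (j-1)) := by
          rw [mul_pow, hB2, ← pow_mul, mul_comm (j-1) 2]
  have hg : gaussPDF θ ^ 2 = (2 * Real.pi)⁻¹ * Real.exp (-θ ^ 2) := by
    rw [gaussPDF, mul_pow, ← Real.exp_nat_mul, inv_pow, sq_sqrt (by positivity)]
    norm_num
    ring_nf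
  rw [hg]
  have hpow : (0:ℝ) ≤ (1 + θ * Real.sqrt (Real.exp 1 / j)) ^ (2 * (j-1)) := by positivity
  calc (4 / ((j)! : ℝ)) * hermiteR (j - 1) θ ^ 2 * ((2 * Real.pi)⁻¹ * Real.exp (-θ ^ 2))
      ≤ (4 / ((j)! : ℝ)) *
          ((Real.pi / 2 * (j)!) * (1 + θ * Real.sqrt (Real.exp 1 / j)) ^ (2 * (j-1))) *
        ((2 * Real.pi)⁻¹ * Real.exp (-θ ^ 2)) := by
        apply mul_le_mul_of_nonneg_right (mul_le_mul_of_nonneg_left hsq (by positivity))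
        positivity
    _ = (1 + θ * Real.sqrt (Real.exp 1 / j)) ^ (2 * (j - 1)) * Real.exp (-θ ^ 2) := by
        field_simp
        ring
end

section
/- For even j ≥ 2 and θ ≥ 0, the normalized Hermite polynomial value satisfies (1/√(j!))·|h_{j−1}(θ)| ≤ (2e²/(π j³))^{1/4} · (1 + θ√(e/j))^{j−1}. -/
open Real

open Finset


lemma sqrt_pi_le_stirlingSeq (n : ℕ) (hn : 1 ≤ n) : Real.sqrt π ≤ Stirling.stirlingSeq n := by
  obtain ⟨k, rfl⟩ := Nat.exists_eq_add_of_le hn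
  have h : Filter.Tendsto (Stirling.stirlingSeq ∘ Nat.succ) Filter.atTop (nhds (Real.sqrt π)) :=
    Stirling.tendsto_stirlingSeq_sqrt_pi.comp (Filter.tendsto_add_atTop_nat 1)
  have := Stirling.stirlingSeq'_antitone.le_of_tendsto h k
  simpa [Nat.succ_eq_add_one, Nat.add_comm] using this

lemma factorial_stirling_lower (n : ℕ) (hn : 1 ≤ n) :
    Real.sqrt (2 * n) * (n / Real.exp 1) ^ n * Real.sqrt π ≤ (n.factorial : ℝ) := by
  have h := sqrt_pi_le_stirlingSeq n hn
  have hpos : (0:ℝ) < Real.sqrt (2 * n) * (n / Real.exp 1) ^ n := by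
    have hn' : (0:ℝ) < n := by exact_mod_cast hn
    positivity
  rw [Stirling.stirlingSeq, le_div_iff₀ hpos] at h
  linarith [h]

lemma stirlingSeq_anti {a b : ℕ} (ha : 1 ≤ a) (hab : a ≤ b) :
    Stirling.stirlingSeq b ≤ Stirling.stirlingSeq a := by
  obtain ⟨a, rfl⟩ := Nat.exists_eq_add_of_le ha
  obtain ⟨c, rfl⟩ := Nat.exists_eq_add_of_le hab
  have := Stirling.stirlingSeq'_antitone (Nat.le_add_right a c)
  simpa [Function.comp, Nat.succ_eq_add_one, Nat.add_comm, Nat.add_assoc, Nat.add_left_comm]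
    using this

lemma factorial_eq_stirling (n : ℕ) (hn : 1 ≤ n) :
    (n.factorial : ℝ) = Stirling.stirlingSeq n * (Real.sqrt (2 * n) * (n / Real.exp 1) ^ n) := by
  have hn' : (0:ℝ) < n := by exact_mod_cast hn
  rw [Stirling.stirlingSeq, div_mul_cancel₀]
  positivity

lemma doubleFactorial_le (m : ℕ) (hm : 1 ≤ m) :
    ((2 * m - 1).doubleFactorial : ℝ) ≤ Real.sqrt 2 * (2 * m / Real.exp 1) ^ m := by
  have hm' : (0:ℝ) < m := by exact_mod_cast hm
  have hfac : ((2 * m).factorial : ℝ) = 2 ^ m * m.factorial * (2 * m - 1).doubleFactorial := by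
    have h1 : (2 * m - 1) + 1 = 2 * m := by omega
    have := Nat.factorial_eq_mul_doubleFactorial (2 * m - 1)
    rw [h1, Nat.doubleFactorial_two_mul] at this
    exact_mod_cast this
  have hpos : (0:ℝ) < 2 ^ m * (m.factorial : ℝ) := by positivity
  rw [← mul_le_mul_iff_of_pos_right hpos]
  calc ((2 * m - 1).doubleFactorial : ℝ) * (2 ^ m * (m.factorial:ℝ))
      = ((2 * m).factorial : ℝ) := by rw [hfac]; ring
    _ = Stirling.stirlingSeq (2 * m) * (Real.sqrt (2 * (2 * m)) * ((2 * m) / Real.exp 1) ^ (2 * m)) := by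
        rw [factorial_eq_stirling (2 * m) (by omega)]; push_cast; ring_nf
    _ ≤ Stirling.stirlingSeq m * (Real.sqrt (2 * (2 * m)) * ((2 * m) / Real.exp 1) ^ (2 * m)) := by
        apply mul_le_mul_of_nonneg_right (stirlingSeq_anti hm (by omega))
        positivity
    _ = Real.sqrt 2 * ((2 * m : ℝ) / Real.exp 1) ^ m * (2 ^ m * m.factorial) := by
        rw [factorial_eq_stirling m hm]
        have e1 : Real.sqrt (2 * (2 * (m:ℝ))) = Real.sqrt 2 * Real.sqrt (2 * m) := by
          rw [← Real.sqrt_mul (by norm_num : (0:ℝ) ≤ 2)]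
        have e2 : ((2 * (m:ℝ)) / Real.exp 1) ^ (2 * m) = (((2 * (m:ℝ)) / Real.exp 1) ^ m) ^ 2 := by
          rw [mul_comm 2 m, pow_mul]
        have e3 : (2:ℝ) ^ m * ((m:ℝ) / Real.exp 1) ^ m = ((2 * (m:ℝ)) / Real.exp 1) ^ m := by
          rw [← mul_pow, mul_div_assoc]
        push_cast
        rw [e1, e2, ← e3]
        ring

lemma key2 (j m : ℕ) (hj : 2 ≤ j) (hm : 2 * m ≤ j - 1) :
    ((2 * m - 1).doubleFactorial : ℝ) * (Real.exp 1 / j) ^ m ≤ Real.sqrt 2 := by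
  have hj' : (0:ℝ) < j := by positivity
  rcases Nat.eq_zero_or_pos m with rfl | hm1
  · simpa using Real.one_le_sqrt.mpr (by norm_num)
  · calc ((2 * m - 1).doubleFactorial : ℝ) * (Real.exp 1 / j) ^ m
        ≤ Real.sqrt 2 * (2 * m / Real.exp 1) ^ m * (Real.exp 1 / j) ^ m := by
          apply mul_le_mul_of_nonneg_right (doubleFactorial_le m hm1)
          positivity
      _ = Real.sqrt 2 * (2 * m / j) ^ m := by
          rw [mul_assoc, ← mul_pow]
          congr 2
          field_simp
      _ ≤ Real.sqrt 2 * 1 := by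
          apply mul_le_mul_of_nonneg_left _ (Real.sqrt_nonneg 2)
          apply pow_le_one₀ (by positivity)
          rw [div_le_one hj']
          have : 2 * m ≤ j := by omega
          exact_mod_cast this
      _ = Real.sqrt 2 := mul_one _

lemma key1 (j : ℕ) (hj : 2 ≤ j) :
    Real.sqrt 2 ≤ (2 * Real.exp 1 ^ 2 / (π * (j:ℝ) ^ 3)) ^ ((1:ℝ)/4) *
      Real.sqrt (j.factorial) * Real.sqrt (Real.exp 1 / j) ^ (j - 1) := by
  have hj' : (0:ℝ) < j := by positivity
  have hpi : (0:ℝ) < π := Real.pi_pos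
  have he : (0:ℝ) < Real.exp 1 := Real.exp_pos 1
  set x : ℝ := 2 * Real.exp 1 ^ 2 / (π * (j:ℝ) ^ 3) with hx
  have hx0 : (0:ℝ) ≤ x := by positivity
  set s : ℝ := Real.sqrt (Real.exp 1 / j) with hs
  have hs2 : s ^ 2 = Real.exp 1 / j := Real.sq_sqrt (by positivity)
  rw [← pow_le_pow_iff_left₀ (Real.sqrt_nonneg 2) (by positivity) (four_ne_zero (α := ℕ))]
  have e1 : Real.sqrt 2 ^ 4 = 4 := by
    rw [show (4:ℕ) = 2 * 2 from rfl, pow_mul, Real.sq_sqrt (by norm_num : (0:ℝ) ≤ 2)]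
    norm_num
  have e2 : (x ^ ((1:ℝ)/4) * Real.sqrt (j.factorial) * s ^ (j-1)) ^ 4
      = x * (Real.sqrt (j.factorial) ^ 2) ^ 2 * ((s ^ 2) ^ 2) ^ (j - 1) := by
    rw [mul_pow, mul_pow]
    congr 1
    · congr 1
      · rw [← Real.rpow_natCast (x ^ ((1:ℝ)/4)) 4, ← Real.rpow_mul hx0]
        norm_num
      · rw [show (4:ℕ) = 2 * 2 from rfl, pow_mul]
    · simp only [← pow_mul]
      congr 1
      ring
  rw [e1, e2, Real.sq_sqrt (by positivity : (0:ℝ) ≤ (j.factorial : ℝ)), hs2]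
  -- now: 4 ≤ x * (j!)^2 * ((e/j)^2)^(j-1)
  have hfac := factorial_stirling_lower j (by omega)
  have hfacsq : Real.sqrt (2 * j) ^ 2 * (((j:ℝ) / Real.exp 1) ^ j) ^ 2 * Real.sqrt π ^ 2
      ≤ ((j.factorial : ℝ)) ^ 2 := by
    have h0 : (0:ℝ) ≤ Real.sqrt (2 * j) * ((j:ℝ) / Real.exp 1) ^ j * Real.sqrt π := by positivity
    calc Real.sqrt (2 * j) ^ 2 * (((j:ℝ) / Real.exp 1) ^ j) ^ 2 * Real.sqrt π ^ 2
        = (Real.sqrt (2 * j) * ((j:ℝ) / Real.exp 1) ^ j * Real.sqrt π) ^ 2 := by ring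
      _ ≤ ((j.factorial : ℝ)) ^ 2 := by
          apply pow_le_pow_left₀ h0 hfac
  rw [Real.sq_sqrt (by positivity : (0:ℝ) ≤ 2 * (j:ℝ)), Real.sq_sqrt hpi.le] at hfacsq
  have hmono : x * (2 * (j:ℝ) * (((j:ℝ) / Real.exp 1) ^ j) ^ 2 * π) * ((Real.exp 1 / j) ^ 2) ^ (j - 1)
      ≤ x * ((j.factorial:ℝ)) ^ 2 * ((Real.exp 1 / j) ^ 2) ^ (j - 1) := by
    apply mul_le_mul_of_nonneg_right _ (by positivity)
    exact mul_le_mul_of_nonneg_left hfacsq hx0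
  refine le_trans (le_of_eq ?_) hmono
  -- equality: 4 = x * (2 j (j/e)^{2j} π) * (e/j)^{2(j-1)}
  have hji : (j:ℝ) / Real.exp 1 * (Real.exp 1 / j) = 1 := by field_simp
  have hsplit : (((j:ℝ) / Real.exp 1) ^ j) ^ 2 = (((j:ℝ) / Real.exp 1) ^ 2) ^ (j - 1) * ((j:ℝ) / Real.exp 1) ^ 2 := by
    rw [← pow_mul, ← pow_mul, ← pow_add]
    congr 1
    omega
  rw [hsplit]
  have hcancel : (((j:ℝ) / Real.exp 1) ^ 2) ^ (j - 1) * ((Real.exp 1 / j) ^ 2) ^ (j - 1) = 1 := by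
    rw [← mul_pow, ← mul_pow, hji, one_pow, one_pow]
  calc (4:ℝ) = x * (2 * (j:ℝ) * ((j:ℝ) / Real.exp 1) ^ 2 * π)
        * ((((j:ℝ) / Real.exp 1) ^ 2) ^ (j - 1) * ((Real.exp 1 / j) ^ 2) ^ (j - 1)) := by
        rw [hcancel, mul_one, hx]
        field_simp
        ring
    _ = x * (2 * (j:ℝ) * ((((j:ℝ) / Real.exp 1) ^ 2) ^ (j - 1) * ((j:ℝ) / Real.exp 1) ^ 2) * π) * ((Real.exp 1 / j) ^ 2) ^ (j - 1) := by
        ring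

theorem normalized_hermite_value_bound (j : ℕ) (hj : Even j) (hj2 : 2 ≤ j) (θ : ℝ) (hθ : 0 ≤ θ) :
    (Real.sqrt (Nat.factorial j))⁻¹ * |hermiteR (j - 1) θ| ≤
      (2 * Real.exp 1 ^ 2 / (Real.pi * (j : ℝ) ^ 3)) ^ ((1 : ℝ) / 4) *
        (1 + θ * Real.sqrt (Real.exp 1 / j)) ^ (j - 1) := by
  have hj0 : 0 < j := by omega
  have hjR : (0:ℝ) < j := by positivity
  set n := j - 1 with hn
  set s := Real.sqrt (Real.exp 1 / j) with hsdef
  set C := (2 * Real.exp 1 ^ 2 / (Real.pi * (j : ℝ) ^ 3)) ^ ((1:ℝ)/4) with hCdef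
  have hC : 0 ≤ C := Real.rpow_nonneg (by positivity) _
  have hf : 0 < Real.sqrt (j.factorial) := Real.sqrt_pos.mpr (by positivity)
  have hs0 : 0 ≤ s := Real.sqrt_nonneg _
  have hs2 : s ^ 2 = Real.exp 1 / j := Real.sq_sqrt (by positivity)
  have hexp : hermiteR n θ
      = ∑ i ∈ Finset.range (n + 1), (((Polynomial.hermite n).coeff i : ℤ) : ℝ) * θ ^ i := by
    rw [hermiteR, Polynomial.aeval_def, Polynomial.eval₂_eq_sum_range,
      Polynomial.natDegree_hermite]
    simp
  have keyterm : ∀ i ∈ Finset.range (n + 1),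
      (Real.sqrt (j.factorial))⁻¹ * (|(((Polynomial.hermite n).coeff i : ℤ) : ℝ)| * θ ^ i)
        ≤ C * ((s * θ) ^ i * 1 ^ (n - i) * (n.choose i : ℝ)) := by
    intro i hi
    have hi' : i ≤ n := by
      have := Finset.mem_range.mp hi; omega
    rw [Polynomial.coeff_hermite]
    by_cases hev : Even (n + i)
    · rw [if_pos hev]
      obtain ⟨m, hm⟩ := (Nat.even_sub hi').mpr (Nat.even_add.mp hev)
      have habs : |((((-1:ℤ) ^ ((n - i) / 2) * (n - i - 1).doubleFactorial * n.choose i : ℤ)) : ℝ)|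
          = ((2 * m - 1).doubleFactorial : ℝ) * (n.choose i : ℝ) := by
        have h1 : n - i - 1 = 2 * m - 1 := by omega
        push_cast [h1]
        rw [abs_mul, abs_mul, abs_pow, abs_neg, abs_one, one_pow, one_mul,
          abs_of_nonneg (by positivity : (0:ℝ) ≤ ((2 * m - 1).doubleFactorial : ℝ)),
          abs_of_nonneg (by positivity : (0:ℝ) ≤ (n.choose i : ℝ))]
      rw [habs]
      have hkey : (Real.sqrt (j.factorial))⁻¹ * ((2 * m - 1).doubleFactorial : ℝ) ≤ C * s ^ i := by
        rw [inv_mul_le_iff₀ hf]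
        have hpos : (0:ℝ) < (Real.exp 1 / j) ^ m := by positivity
        rw [← mul_le_mul_iff_of_pos_right hpos]
        have hpow : s ^ i * (Real.exp 1 / j) ^ m = s ^ n := by
          rw [← hs2, ← pow_mul, ← pow_add]
          congr 1
          omega
        calc ((2 * m - 1).doubleFactorial : ℝ) * (Real.exp 1 / j) ^ m
            ≤ Real.sqrt 2 := key2 j m hj2 (by omega)
          _ ≤ C * Real.sqrt (j.factorial) * s ^ n := key1 j hj2
          _ = Real.sqrt (j.factorial) * (C * s ^ i) * (Real.exp 1 / j) ^ m := by
              rw [← hpow]; ring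
      calc (Real.sqrt (j.factorial))⁻¹ * (((2 * m - 1).doubleFactorial : ℝ) * (n.choose i : ℝ) * θ ^ i)
          = ((Real.sqrt (j.factorial))⁻¹ * ((2 * m - 1).doubleFactorial : ℝ)) * ((n.choose i : ℝ) * θ ^ i) := by
            ring
        _ ≤ (C * s ^ i) * ((n.choose i : ℝ) * θ ^ i) := by
            apply mul_le_mul_of_nonneg_right hkey
            positivity
        _ = C * ((s * θ) ^ i * 1 ^ (n - i) * (n.choose i : ℝ)) := by
            rw [mul_pow]; ring
    · rw [if_neg hev]
      simp only [Int.cast_zero, abs_zero, zero_mul, mul_zero]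
      positivity
  calc (Real.sqrt (j.factorial))⁻¹ * |hermiteR n θ|
      ≤ (Real.sqrt (j.factorial))⁻¹ *
          ∑ i ∈ Finset.range (n + 1), |(((Polynomial.hermite n).coeff i : ℤ) : ℝ)| * θ ^ i := by
        apply mul_le_mul_of_nonneg_left _ (by positivity)
        rw [hexp]
        refine (Finset.abs_sum_le_sum_abs _ _).trans ?_
        apply Finset.sum_le_sum
        intro i _
        rw [abs_mul, abs_pow, abs_of_nonneg hθ]
    _ = ∑ i ∈ Finset.range (n + 1),
          (Real.sqrt (j.factorial))⁻¹ * (|(((Polynomial.hermite n).coeff i : ℤ) : ℝ)| * θ ^ i) := by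
        rw [Finset.mul_sum]
    _ ≤ ∑ i ∈ Finset.range (n + 1), C * ((s * θ) ^ i * 1 ^ (n - i) * (n.choose i : ℝ)) :=
        Finset.sum_le_sum keyterm
    _ = C * (s * θ + 1) ^ n := by
        rw [← Finset.mul_sum]
        congr 1
        exact (add_pow (s * θ) 1 n).symm
    _ = C * (1 + θ * s) ^ n := by ring_nf
end
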